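/- arXiv:2402.11032 — 5 statements merged into one kernel-verified Lean document; each statement's English description precedes it below -/
import Mathlib

section
/- For every subset D of {1, ..., n-1} and all indices 1 ≤ i < j < k < l ≤ n, the vector r_D satisfies both Kalmanson inequalities: r_D(i,j) + r_D(k,l) ≤ r_D(i,k) + r_D(j,l) and r_D(i,l) + r_D(j,k) ≤ r_D(i,k) + r_D(j,l). -/
/-- `r_D i j = 1` iff some breakpoint `m ∈ D` satisfies `i ≤ m < j`. -/
def rD (D : Finset ℕ) (i j : ℕ) : ℕ := if ∃ m ∈ D, i ≤ m ∧ m < j then 1 else 0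

lemma rD_mono (D : Finset ℕ) {i i' j j' : ℕ} (h1 : i' ≤ i) (h2 : j ≤ j') :
    rD D i j ≤ rD D i' j' := by
  unfold rD
  split
  · rename_i h
    obtain ⟨m, hm, h3, h4⟩ := h
    rw [if_pos ⟨m, hm, le_trans h1 h3, lt_of_lt_of_le h4 h2⟩]
  · exact Nat.zero_le _

lemma rD_le_one (D : Finset ℕ) (i j : ℕ) : rD D i j ≤ 1 := by
  unfold rD; split <;> omega

/-- The vectors `r_D` satisfy both Kalmanson inequalities for all
`1 ≤ i < j < k < l ≤ n`. -/
theorem rD_kalmanson (n : ℕ) (hn : 4 ≤ n) (D : Finset ℕ)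
    (hD : D ⊆ Finset.Icc 1 (n - 1)) (i j k l : ℕ)
    (hi : 1 ≤ i) (hij : i < j) (hjk : j < k) (hkl : k < l) (hl : l ≤ n) :
    rD D i j + rD D k l ≤ rD D i k + rD D j l ∧
    rD D i l + rD D j k ≤ rD D i k + rD D j l := by
  constructor
  · exact Nat.add_le_add (rD_mono D le_rfl hjk.le) (rD_mono D hjk.le le_rfl)
  · by_cases h : ∃ m ∈ D, j ≤ m ∧ m < k
    · obtain ⟨m, hm, h1, h2⟩ := h
      have hik : rD D i k = 1 := if_pos ⟨m, hm, le_trans hij.le h1, h2⟩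
      have hjl : rD D j l = 1 := if_pos ⟨m, hm, h1, lt_trans h2 hkl⟩
      rw [hik, hjl]
      exact Nat.add_le_add (rD_le_one D i l) (rD_le_one D j k)
    · have hjk0 : rD D j k = 0 := if_neg h
      rw [hjk0, Nat.add_zero]
      unfold rD
      split
      · rename_i hil
        obtain ⟨m, hm, h1, h2⟩ := hil
        rcases lt_or_ge m k with hc | hc
        · rw [if_pos ⟨m, hm, h1, hc⟩]; omega
        · have : rD D j l = 1 := if_pos ⟨m, hm, le_trans hjk.le hc, h2⟩
          unfold rD at this; rw [this]; omega
      · exact Nat.zero_le _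
end

section
/- Any nonnegative linear combination of cut semimetrics of circular splits satisfies the Kalmanson inequalities. Precisely: for n ≥ 4, if δ(x,y) = Σ_S a_S · 1_S(x,y), where the sum is over splits S of [n] whose parts are cyclic intervals of the circular order (1, 2, ..., n) and all weights a_S ≥ 0, then for all 1 ≤ i < j < k < l ≤ n: δ(i,j) + δ(k,l) ≤ δ(i,k) + δ(j,l) and δ(i,l) + δ(j,k) ≤ δ(i,k) + δ(j,l). -/
private lemma cut_kalmanson (P Q R S : Prop) [Decidable P] [Decidable Q] [Decidable R]
    [Decidable S] (hPR : P → R → Q) (hQS : Q → S → R) (hPS : P → S → Q) :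
    ((if (P ↔ Q) then (0:ℝ) else 1) + (if (R ↔ S) then (0:ℝ) else 1)
      ≤ (if (P ↔ R) then (0:ℝ) else 1) + (if (Q ↔ S) then (0:ℝ) else 1)) ∧
    ((if (P ↔ S) then (0:ℝ) else 1) + (if (Q ↔ R) then (0:ℝ) else 1)
      ≤ (if (P ↔ R) then (0:ℝ) else 1) + (if (Q ↔ S) then (0:ℝ) else 1)) := by
  by_cases hP : P <;> by_cases hQ : Q <;> by_cases hR : R <;> by_cases hS : S <;>
    simp_all

/-- Any nonnegative linear combination of cut semimetrics of circular splits of `[n]`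
(splits one of whose parts is a cyclic interval, equivalently a linear interval
`{a s, …, b s}`) satisfies the Kalmanson inequalities. -/
theorem circular_combination_kalmanson (n : ℕ) (hn : 4 ≤ n)
    (σ : Type*) [Fintype σ] (a b : σ → ℕ) (w : σ → ℝ) (hw : ∀ s, 0 ≤ w s)
    (δ : ℕ → ℕ → ℝ)
    (hδ : ∀ x y, δ x y = ∑ s : σ, w s *
      (if (x ∈ Finset.Icc (a s) (b s) ↔ y ∈ Finset.Icc (a s) (b s)) then 0 else 1)) :
    ∀ i j k l : ℕ, 1 ≤ i → i < j → j < k → k < l → l ≤ n →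
      δ i j + δ k l ≤ δ i k + δ j l ∧ δ i l + δ j k ≤ δ i k + δ j l := by
  intro i j k l _ hij hjk hkl _
  have conv : ∀ s : σ, ∀ x y z : ℕ, x ≤ y → y ≤ z →
      x ∈ Finset.Icc (a s) (b s) → z ∈ Finset.Icc (a s) (b s) →
      y ∈ Finset.Icc (a s) (b s) := by
    intro s x y z hxy hyz hx hz
    simp only [Finset.mem_Icc] at *
    exact ⟨hx.1.trans hxy, hyz.trans hz.2⟩
  have key : ∀ s : σ,
      (w s * (if (i ∈ Finset.Icc (a s) (b s) ↔ j ∈ Finset.Icc (a s) (b s)) then (0:ℝ) else 1)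
        + w s * (if (k ∈ Finset.Icc (a s) (b s) ↔ l ∈ Finset.Icc (a s) (b s)) then 0 else 1)
        ≤ w s * (if (i ∈ Finset.Icc (a s) (b s) ↔ k ∈ Finset.Icc (a s) (b s)) then 0 else 1)
        + w s * (if (j ∈ Finset.Icc (a s) (b s) ↔ l ∈ Finset.Icc (a s) (b s)) then 0 else 1)) ∧
      (w s * (if (i ∈ Finset.Icc (a s) (b s) ↔ l ∈ Finset.Icc (a s) (b s)) then (0:ℝ) else 1)
        + w s * (if (j ∈ Finset.Icc (a s) (b s) ↔ k ∈ Finset.Icc (a s) (b s)) then 0 else 1)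
        ≤ w s * (if (i ∈ Finset.Icc (a s) (b s) ↔ k ∈ Finset.Icc (a s) (b s)) then 0 else 1)
        + w s * (if (j ∈ Finset.Icc (a s) (b s) ↔ l ∈ Finset.Icc (a s) (b s)) then 0 else 1)) := by
    intro s
    have h := cut_kalmanson (i ∈ Finset.Icc (a s) (b s)) (j ∈ Finset.Icc (a s) (b s))
      (k ∈ Finset.Icc (a s) (b s)) (l ∈ Finset.Icc (a s) (b s))
      (fun hi hk => conv s i j k hij.le hjk.le hi hk)
      (fun hj hl => conv s j k l hjk.le hkl.le hj hl)
      (fun hi hl => conv s i j l hij.le (hjk.le.trans hkl.le) hi hl)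
    constructor
    · calc w s * _ + w s * _ = w s * (_ + _) := (mul_add _ _ _).symm
        _ ≤ w s * (_ + _) := mul_le_mul_of_nonneg_left h.1 (hw s)
        _ = _ := mul_add _ _ _
    · calc w s * _ + w s * _ = w s * (_ + _) := (mul_add _ _ _).symm
        _ ≤ w s * (_ + _) := mul_le_mul_of_nonneg_left h.2 (hw s)
        _ = _ := mul_add _ _ _
  simp only [hδ]
  constructor
  · rw [← Finset.sum_add_distrib, ← Finset.sum_add_distrib]
    exact Finset.sum_le_sum fun s _ => (key s).1
  · rw [← Finset.sum_add_distrib, ← Finset.sum_add_distrib]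
    exact Finset.sum_le_sum fun s _ => (key s).2
end

section
/- Let δ be a real-valued function on pairs {i,j} with 1 ≤ i < j ≤ n satisfying (a) the left inequalities δ(1,l) ≤ δ(1,l+1) for all 2 ≤ l ≤ n-1, and (b) the covering inequalities δ(i,j) + δ(i-1,j+1) ≤ δ(i,j+1) + δ(i-1,j) for all 2 ≤ i ≤ j ≤ n-1. Then δ(i,j) ≤ δ(i,k) for all 1 ≤ i < j < k ≤ n. -/
/-- If `δ` satisfies the left inequalities and the covering inequalities
(with the convention `δ(i,i) = 0`, so the case `i = j` is the triangle inequality),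
then `δ(i,j) ≤ δ(i,k)` for all `1 ≤ i < j < k ≤ n`. -/
theorem monotone_from_facets (n : ℕ) (hn : 3 ≤ n) (δ : ℕ → ℕ → ℝ)
    (hdiag : ∀ i, δ i i = 0)
    (hleft : ∀ l : ℕ, 2 ≤ l → l ≤ n - 1 → δ 1 l ≤ δ 1 (l + 1))
    (hcov : ∀ i j : ℕ, 2 ≤ i → i ≤ j → j ≤ n - 1 →
      δ i j + δ (i - 1) (j + 1) ≤ δ i (j + 1) + δ (i - 1) j) :
    ∀ i j k : ℕ, 1 ≤ i → i < j → j < k → k ≤ n → δ i j ≤ δ i k := by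
  have step : ∀ i j : ℕ, 1 ≤ i → i < j → j ≤ n - 1 → δ i j ≤ δ i (j + 1) := by
    intro i
    induction i with
    | zero => intro j h; omega
    | succ m ih =>
      intro j h1 h2 h3
      rcases Nat.eq_zero_or_pos m with hm | hm
      · subst hm
        exact hleft j (by omega) h3
      · have hc := hcov (m + 1) j (by omega) (by omega) h3
        have hih := ih j hm (by omega) h3
        simp only [Nat.add_sub_cancel] at hc
        linarith
  intro i j k hi hij hjk hk
  induction k with
  | zero => omega
  | succ m ihm =>
    rcases Nat.lt_or_ge j m with h | h
    · have h1 : δ i j ≤ δ i m := ihm (by omega) (by omega)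
      have h2 : δ i m ≤ δ i (m + 1) := step i m hi (by omega) (by omega)
      linarith
    · have : j = m := by omega
      subst this
      exact step i j hi hij (by omega)
end

section
/- Let δ be a real-valued function on pairs {i,j}, 1 ≤ i < j ≤ n, satisfying all facet inequalities of the equidistant cone EDC_{KN_n} (left, right, triangle, and covering inequalities). If δ(i,j) = δ(i+1,j) for some i < j (with i+1 < j), then δ(i,j+1) = δ(i+1,j+1) (when j+1 ≤ n). Symmetrically, if δ(i,j) = δ(i,j+1) then δ(i-1,j) = δ(i-1,j+1) (when i-1 ≥ 1). -/
/-- Equality propagation for points satisfying all facet inequalities of the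
equidistant cone `EDC_{KN_n}`: if `δ(i,j) = δ(i+1,j)` then `δ(i,j+1) = δ(i+1,j+1)`
(when `j+1 ≤ n`), and if `δ(i,j) = δ(i,j+1)` then `δ(i-1,j) = δ(i-1,j+1)`
(when `i-1 ≥ 1`). -/
theorem equality_propagation (n : ℕ) (hn : 3 ≤ n) (δ : ℕ → ℕ → ℝ)
    (hleft : ∀ i : ℕ, 2 ≤ i → i ≤ n - 1 → δ 1 i ≤ δ 1 (i + 1))
    (hright : ∀ i : ℕ, 2 ≤ i → i ≤ n - 1 → δ i n ≤ δ (i - 1) n)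
    (htri : ∀ i : ℕ, 2 ≤ i → i ≤ n - 1 →
      δ (i - 1) (i + 1) ≤ δ (i - 1) i + δ i (i + 1))
    (hcov : ∀ i j : ℕ, 2 ≤ i → i < j → j ≤ n - 1 →
      δ i j + δ (i - 1) (j + 1) ≤ δ i (j + 1) + δ (i - 1) j) :
    (∀ i j : ℕ, 1 ≤ i → i + 1 < j → j + 1 ≤ n →
      δ i j = δ (i + 1) j → δ i (j + 1) = δ (i + 1) (j + 1)) ∧
    (∀ i j : ℕ, 2 ≤ i → i < j → j + 1 ≤ n →
      δ i j = δ i (j + 1) → δ (i - 1) j = δ (i - 1) (j + 1)) := by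
  -- Vertical monotonicity: δ(i,k) ≤ δ(i-1,k), by downward induction on k.
  have A : ∀ m i k : ℕ, n - k = m → 2 ≤ i → i < k → k ≤ n →
      δ i k ≤ δ (i - 1) k := by
    intro m
    induction m with
    | zero =>
      intro i k hm h2 hik hkn
      have hk : k = n := by omega
      subst hk
      exact hright i h2 (by omega)
    | succ m ih =>
      intro i k hm h2 hik hkn
      have hc := hcov i k h2 hik (by omega)
      have h1 := ih i (k + 1) (by omega) h2 (by omega) (by omega)
      linarith
  -- Horizontal monotonicity: δ(i,j) ≤ δ(i,j+1), by induction on i.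
  have B : ∀ i j : ℕ, 1 ≤ i → i < j → j ≤ n - 1 → δ i j ≤ δ i (j + 1) := by
    intro i
    induction i with
    | zero => intro j h1; omega
    | succ i ih =>
      intro j h1 hij hjn
      rcases Nat.eq_zero_or_pos i with hi | hi
      · subst hi
        exact hleft j (by omega) hjn
      · have hc := hcov (i + 1) j (by omega) hij hjn
        simp only [Nat.add_sub_cancel] at hc
        have hb := ih j (by omega) (by omega) hjn
        linarith
  constructor
  · intro i j h1 hij hjn heq
    have hc := hcov (i + 1) j (by omega) hij (by omega)
    simp only [Nat.add_sub_cancel] at hc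
    have ha := A (n - (j + 1)) (i + 1) (j + 1) rfl (by omega) (by omega) (by omega)
    simp only [Nat.add_sub_cancel] at ha
    linarith
  · intro i j h2 hij hjn heq
    have hc := hcov i j h2 hij (by omega)
    have hb := B (i - 1) j (by omega) (by omega) (by omega)
    linarith
end

section
/- Let x ∈ CRY_n and define δ(k,l) = 1 - Σ_{i=1}^{k} Σ_{j=l}^{n} x_{ij} for 1 ≤ k < l ≤ n. Then δ satisfies: δ(1,n) ≤ 1; the left inequalities δ(1,l) ≤ δ(1,l+1) for 2 ≤ l ≤ n-1; the right inequalities δ(k,n) ≤ δ(k-1,n) for 2 ≤ k ≤ n-1; the triangle inequalities δ(l-1,l+1) ≤ δ(l-1,l) + δ(l,l+1) for 2 ≤ l ≤ n-1; and the covering inequalities δ(i,j) + δ(i-1,j+1) ≤ δ(i,j+1) + δ(i-1,j) for 2 ≤ i < j ≤ n-1. That is, the affine map φ sends CRY_n into the polytope PEDC_n. -/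
open Finset

lemma cry_split (x : ℕ → ℝ) (a b c : ℕ) (h1 : a ≤ b) (h2 : b ≤ c) :
    ∑ j ∈ Icc (a + 1) c, x j = ∑ j ∈ Icc (a + 1) b, x j + ∑ j ∈ Icc (b + 1) c, x j := by
  rw [Finset.Icc_add_one_left_eq_Ioc, Finset.Icc_add_one_left_eq_Ioc, Finset.Icc_add_one_left_eq_Ioc,
    Finset.sum_Ioc_consecutive x h1 h2]

lemma cry_key (n : ℕ) (x : ℕ → ℕ → ℝ)
    (hrow : ∀ i ∈ Icc 1 n, ∑ j ∈ Icc 1 n, x i j = 1)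
    (hcol : ∀ j ∈ Icc 1 n, ∑ i ∈ Icc 1 n, x i j = 1)
    (hsub : ∀ i ∈ Icc 1 n, ∀ j ∈ Icc 1 n, j + 1 < i → x i j = 0)
    (l : ℕ) (hl1 : 1 ≤ l) (hln : l ≤ n) :
    ∑ i ∈ Icc 1 l, ∑ j ∈ Icc l n, x i j = 1 := by
  obtain ⟨m, rfl⟩ : ∃ m, l = m + 1 := ⟨l - 1, by omega⟩
  have hrows : ∑ i ∈ Icc 1 (m + 1), ∑ j ∈ Icc 1 n, x i j = (m + 1 : ℝ) := by
    rw [Finset.sum_congr rfl (fun i hi => hrow i (by simp at hi ⊢; omega))]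
    simp [Nat.card_Icc]
  have hleft : ∑ i ∈ Icc 1 (m + 1), ∑ j ∈ Icc 1 m, x i j = (m : ℝ) := by
    rw [Finset.sum_comm]
    have h1 : ∀ j ∈ Icc 1 m, ∑ i ∈ Icc 1 (m + 1), x i j = 1 := by
      intro j hj
      have hj' : j ∈ Icc 1 n := by simp at hj ⊢; omega
      have hc := hcol j hj'
      rw [show (1:ℕ) = 0 + 1 from rfl, cry_split (fun i => x i j) 0 (m + 1) n (by omega) (by omega)] at hc
      have hz : ∑ i ∈ Icc (m + 1 + 1) n, x i j = 0 :=
        Finset.sum_eq_zero fun i hi => hsub i (by simp at hi ⊢; omega) j hj' (by simp at hi hj; omega)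
      simpa [hz] using hc
    rw [Finset.sum_congr rfl h1]
    simp [Nat.card_Icc]
  have hsp : ∑ i ∈ Icc 1 (m + 1), ∑ j ∈ Icc 1 n, x i j
      = ∑ i ∈ Icc 1 (m + 1), ∑ j ∈ Icc 1 m, x i j
        + ∑ i ∈ Icc 1 (m + 1), ∑ j ∈ Icc (m + 1) n, x i j := by
    rw [← Finset.sum_add_distrib]
    exact Finset.sum_congr rfl fun i _ =>
      cry_split (x i) 0 m n (by omega) (by omega)
  linarith [hrows, hleft, hsp]



open Finset in
/-- The affine map `φ`, with `δ(k,l) = 1 - ∑_{i ≤ k} ∑_{j ≥ l} x_{ij}`, sends the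
Chan–Robbins–Yuen polytope `CRY_n` into the polytope `PEDC_n`: the image satisfies
`δ(1,n) ≤ 1` together with the left, right, triangle, and covering inequalities. -/
theorem cry_maps_to_pedc (n : ℕ) (hn : 3 ≤ n) (x : ℕ → ℕ → ℝ)
    (hpos : ∀ i ∈ Icc 1 n, ∀ j ∈ Icc 1 n, 0 ≤ x i j)
    (hrow : ∀ i ∈ Icc 1 n, ∑ j ∈ Icc 1 n, x i j = 1)
    (hcol : ∀ j ∈ Icc 1 n, ∑ i ∈ Icc 1 n, x i j = 1)
    (hsub : ∀ i ∈ Icc 1 n, ∀ j ∈ Icc 1 n, j + 1 < i → x i j = 0)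
    (δ : ℕ → ℕ → ℝ)
    (hδ : ∀ k l : ℕ, 1 ≤ k → k < l → l ≤ n →
      δ k l = 1 - ∑ i ∈ Icc 1 k, ∑ j ∈ Icc l n, x i j) :
    δ 1 n ≤ 1 ∧
    (∀ l : ℕ, 2 ≤ l → l ≤ n - 1 → δ 1 l ≤ δ 1 (l + 1)) ∧
    (∀ k : ℕ, 2 ≤ k → k ≤ n - 1 → δ k n ≤ δ (k - 1) n) ∧
    (∀ l : ℕ, 2 ≤ l → l ≤ n - 1 →
      δ (l - 1) (l + 1) ≤ δ (l - 1) l + δ l (l + 1)) ∧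
    (∀ i j : ℕ, 2 ≤ i → i < j → j ≤ n - 1 →
      δ i j + δ (i - 1) (j + 1) ≤ δ i (j + 1) + δ (i - 1) j) := by
  have hnn : ∀ k l, 1 ≤ k → k ≤ n → 1 ≤ l → l ≤ n →
      (0:ℝ) ≤ ∑ i ∈ Icc 1 k, ∑ j ∈ Icc l n, x i j := by
    intro k l hk hkn hl1 hln
    exact Finset.sum_nonneg fun i hi => Finset.sum_nonneg fun j hj =>
      hpos i (by simp at hi ⊢; omega) j (by simp at hj ⊢; omega)
  refine ⟨?_, ?_, ?_, ?_, ?_⟩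
  · rw [hδ 1 n le_rfl (by omega) le_rfl]
    have := hnn 1 n (by omega) (by omega) (by omega) le_rfl
    linarith
  · intro l hl2 hln
    rw [hδ 1 l le_rfl (by omega) (by omega), hδ 1 (l + 1) le_rfl (by omega) (by omega)]
    have hle : ∑ i ∈ Icc 1 1, ∑ j ∈ Icc (l + 1) n, x i j
        ≤ ∑ i ∈ Icc 1 1, ∑ j ∈ Icc l n, x i j :=
      Finset.sum_le_sum fun i hi =>
        Finset.sum_le_sum_of_subset_of_nonneg (Finset.Icc_subset_Icc_left (by omega))
          (fun j hj _ => hpos i (by simp at hi ⊢; omega) j (by simp at hj ⊢; omega))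
    linarith
  · intro k hk2 hkn
    rw [hδ k n (by omega) (by omega) le_rfl, hδ (k - 1) n (by omega) (by omega) le_rfl]
    have hle : ∑ i ∈ Icc 1 (k - 1), ∑ j ∈ Icc n n, x i j
        ≤ ∑ i ∈ Icc 1 k, ∑ j ∈ Icc n n, x i j :=
      Finset.sum_le_sum_of_subset_of_nonneg (Finset.Icc_subset_Icc_right (by omega))
        (fun i hi _ => Finset.sum_nonneg fun j hj =>
          hpos i (by simp at hi ⊢; omega) j (by simp at hj ⊢; omega))
    linarith
  · intro l hl2 hln
    obtain ⟨m, rfl⟩ : ∃ m, l = m + 1 := ⟨l - 1, by omega⟩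
    simp only [Nat.add_sub_cancel]
    rw [hδ m (m + 1 + 1) (by omega) (by omega) (by omega),
      hδ m (m + 1) (by omega) (by omega) (by omega),
      hδ (m + 1) (m + 1 + 1) (by omega) (by omega) (by omega)]
    have hkey := cry_key n x hrow hcol hsub (m + 1) (by omega) (by omega)
    rw [Finset.sum_Icc_succ_top (by omega) _] at hkey
    have hS : ∑ i ∈ Icc 1 (m + 1), ∑ j ∈ Icc (m + 1 + 1) n, x i j
        = ∑ i ∈ Icc 1 m, ∑ j ∈ Icc (m + 1 + 1) n, x i j
          + ∑ j ∈ Icc (m + 1 + 1) n, x (m + 1) j :=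
      Finset.sum_Icc_succ_top (by omega) _
    have hT : ∑ j ∈ Icc (m + 1) n, x (m + 1) j
        = x (m + 1) (m + 1) + ∑ j ∈ Icc (m + 1 + 1) n, x (m + 1) j := by
      rw [cry_split (x (m + 1)) m (m + 1) n (by omega) (by omega)]
      simp
    have hx : 0 ≤ x (m + 1) (m + 1) :=
      hpos _ (by simp; omega) _ (by simp; omega)
    linarith
  · intro i j hi2 hij hjn
    obtain ⟨m, rfl⟩ : ∃ m, i = m + 1 := ⟨i - 1, by omega⟩
    simp only [Nat.add_sub_cancel]
    rw [hδ (m + 1) j (by omega) (by omega) (by omega),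
      hδ m (j + 1) (by omega) (by omega) (by omega),
      hδ (m + 1) (j + 1) (by omega) (by omega) (by omega),
      hδ m j (by omega) (by omega) (by omega)]
    have h1 : ∑ i ∈ Icc 1 (m + 1), ∑ j' ∈ Icc j n, x i j'
        = ∑ i ∈ Icc 1 m, ∑ j' ∈ Icc j n, x i j' + ∑ j' ∈ Icc j n, x (m + 1) j' :=
      Finset.sum_Icc_succ_top (by omega) _
    have h2 : ∑ i ∈ Icc 1 (m + 1), ∑ j' ∈ Icc (j + 1) n, x i j'
        = ∑ i ∈ Icc 1 m, ∑ j' ∈ Icc (j + 1) n, x i j'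
          + ∑ j' ∈ Icc (j + 1) n, x (m + 1) j' :=
      Finset.sum_Icc_succ_top (by omega) _
    have hle : ∑ j' ∈ Icc (j + 1) n, x (m + 1) j' ≤ ∑ j' ∈ Icc j n, x (m + 1) j' :=
      Finset.sum_le_sum_of_subset_of_nonneg (Finset.Icc_subset_Icc_left (by omega))
        (fun j' hj' _ => hpos _ (by simp; omega) _ (by simp at hj' ⊢; omega))
    linarith
end
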